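/- Let d = (d_1, …, d_m) be positive integers ordered so that j divides d_1, …, d_{k_j} and j does not divide d_{k_j+1}, …, d_m, where j ≥ 1 and k_j = #{i : j | d_i} ≥ 1, and define for any list e = (e_1, …, e_m) of positive integers the polynomial part W_1(x, e) = B_{m−1}^{(m)}(x + e_1 + ⋯ + e_m | e)/((m−1)! · e_1 ⋯ e_m). Then the j-th Sylvester wave is the finite superposition W_j(s, d) = ∑_{r ∈ {0,…,j−1}^{m−k_j}} W_1(s − ∑_{i=k_j+1}^m d_i r_i, d_j) · Ψ̄_j(s − ∑_{i=k_j+1}^m d_i r_i), where d_j is the j-modified set of summands. -/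

import Mathlib

open PowerSeries Finset

noncomputable section

/-- Restricted partition function `W(s, d)`: the number of tuples `x` of nonnegative
integers with `∑ i, x i * d i = s`. -/
def restrictedPartition (s : ℕ) (d : List ℕ) : ℕ :=
  Set.ncard {x : Fin d.length → ℕ | ∑ i, x i * d.get i = s}

/-- `(e^{dt} - 1)/(d t)` as a formal power series. -/
def bexpS (d : ℂ) : PowerSeries ℂ :=
  PowerSeries.mk fun k => d ^ k / (Nat.factorial (k + 1) : ℂ)

/-- Nörlund Bernoulli polynomial of higher order `B_n^{(m)}(x | d)`, defined through
the generating function `e^{xt} ∏ d_i t/(e^{d_i t} - 1) = ∑ B_n^{(m)}(x|d) t^n/n!`. -/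
def NBern (n : ℕ) (x : ℂ) (d : List ℂ) : ℂ :=
  (Nat.factorial n : ℂ) *
    PowerSeries.coeff n
      (PowerSeries.rescale x (PowerSeries.exp ℂ) * ((d.map fun di => (bexpS di)⁻¹).prod))

/-- `e^{et} - ρ^e` as a formal power series. -/
def frobS (ρ : ℂ) (e : ℕ) : PowerSeries ℂ :=
  PowerSeries.mk fun k => if k = 0 then 1 - ρ ^ e else (e : ℂ) ^ k / (Nat.factorial k : ℂ)

/-- Higher-order Eulerian (Frobenius) polynomial `H_n^{(q)}(x, ρ | e)`, defined through
the generating function `e^{xt} ∏ (1 - ρ^{e_i})/(e^{e_i t} - ρ^{e_i}) = ∑ H_n t^n/n!`. -/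
def FrobH (n : ℕ) (x ρ : ℂ) (e : List ℕ) : ℂ :=
  (Nat.factorial n : ℂ) *
    PowerSeries.coeff n
      (PowerSeries.rescale x (PowerSeries.exp ℂ) *
        ((e.map fun ei => PowerSeries.C (1 - ρ ^ ei) * (frobS ρ ei)⁻¹).prod))

/-- `k_j`, the number of elements of `d` divisible by `j`. -/
def kWeight (j : ℕ) (d : List ℕ) : ℕ := (d.filter fun di => j ∣ di).length

/-- The unit part of the factor `1 - ρ^d e^{-dt}`: if `ρ^d = 1` this factor equals
`t` times the series below, otherwise it equals the series below itself. -/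
def sylFactor (ρ : ℂ) (d : ℕ) : PowerSeries ℂ :=
  if ρ ^ d = 1 then
    PowerSeries.mk fun k => (d : ℂ) * (-(d : ℂ)) ^ k / (Nat.factorial (k + 1) : ℂ)
  else
    PowerSeries.mk fun k =>
      if k = 0 then 1 - ρ ^ d else -ρ ^ d * (-(d : ℂ)) ^ k / (Nat.factorial k : ℂ)

/-- The Sylvester wave `W_j(s, d)`: sum over primitive `j`-th roots of unity `ρ` of the
coefficient of `t^{k_j - 1}` in `t^{k_j} ρ^{-s} e^{st} / ∏ (1 - ρ^{d_i} e^{-d_i t})`. -/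
def SylvesterWave (j : ℕ) (s : ℕ) (d : List ℕ) : ℂ :=
  ∑ ρ ∈ primitiveRoots j ℂ,
    PowerSeries.coeff (kWeight j d - 1)
      ((ρ ^ s)⁻¹ • (PowerSeries.rescale (s : ℂ) (PowerSeries.exp ℂ) *
        ((d.map (sylFactor ρ)).prod)⁻¹))

/-- The prime radical circulator (Ramanujan sum) `Ψ̄_j(s) = ∑_ρ ρ^s` over primitive
`j`-th roots of unity. -/
def primeCirculator (j : ℕ) (s : ℤ) : ℂ :=
  ∑ ρ ∈ primitiveRoots j ℂ, ρ ^ s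

/-- The polynomial part `W_1(x, e) = B_{m-1}^{(m)}(x + e_1 + ⋯ + e_m | e)/((m-1)! e_1⋯e_m)`,
evaluated at an arbitrary complex argument `x`. -/
def polyPart (x : ℂ) (e : List ℕ) : ℂ :=
  NBern (e.length - 1) (x + (e.sum : ℕ)) (e.map fun ei => (ei : ℂ)) /
    ((Nat.factorial (e.length - 1) : ℂ) * (e.prod : ℕ))



abbrev E (a : ℂ) : PowerSeries ℂ := PowerSeries.rescale a (PowerSeries.exp ℂ)
abbrev G (c : ℂ) : PowerSeries ℂ := PowerSeries.mk fun k => c * (-c) ^ k / (Nat.factorial (k + 1) : ℂ)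

lemma coeff_E (a : ℂ) (n : ℕ) : PowerSeries.coeff n (E a) = a ^ n / n.factorial := by
  simp [coeff_rescale, PowerSeries.coeff_exp]
  ring

lemma E_mul_E (a b : ℂ) : E a * E b = E (a + b) := PowerSeries.exp_mul_exp_eq_exp_add a b

lemma constCoeff_E (a : ℂ) : PowerSeries.constantCoeff (E a) = 1 := by
  rw [← PowerSeries.coeff_zero_eq_constantCoeff_apply, coeff_E]; simp

lemma E_zero : E 0 = 1 := by
  ext n
  rw [coeff_E]
  rcases n with _ | n <;> simp

lemma X_mul_G (c : ℂ) : (PowerSeries.X : PowerSeries ℂ) * G c = 1 - E (-c) := by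
  ext n
  rcases n with _ | n
  · simp [coeff_E, constCoeff_E]
  · rw [PowerSeries.coeff_succ_X_mul]
    simp only [PowerSeries.coeff_mk, map_sub, coeff_E, PowerSeries.coeff_one]
    rw [if_neg (Nat.succ_ne_zero n)]
    rw [Nat.factorial_succ]
    push_cast
    field_simp
    ring

lemma X_mul_bexpS (c : ℂ) : (PowerSeries.X : PowerSeries ℂ) * (PowerSeries.C c * bexpS c) = E c - 1 := by
  ext n
  rcases n with _ | n
  · simp [bexpS, constCoeff_E]
  · rw [PowerSeries.coeff_succ_X_mul]
    simp only [bexpS, PowerSeries.coeff_C_mul, PowerSeries.coeff_mk, map_sub, coeff_E,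
      PowerSeries.coeff_one, if_neg (Nat.succ_ne_zero n)]
    rw [pow_succ']
    ring

lemma G_eq (c : ℂ) : G c = PowerSeries.C c * E (-c) * bexpS c := by
  have h : (PowerSeries.X : PowerSeries ℂ) * G c = PowerSeries.X * (PowerSeries.C c * E (-c) * bexpS c) := by
    rw [X_mul_G]
    have : PowerSeries.X * (PowerSeries.C c * E (-c) * bexpS c)
        = E (-c) * (PowerSeries.X * (PowerSeries.C c * bexpS c)) := by ring
    rw [this, X_mul_bexpS, mul_sub, E_mul_E, mul_one]
    rw [neg_add_cancel, E_zero]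
  exact mul_left_cancel₀ PowerSeries.X_ne_zero h

lemma E_pow (b : ℂ) (r : ℕ) : (E b) ^ r = E (r * b) := by
  induction r with
  | zero => simp [E_zero]
  | succ n ih => rw [pow_succ, ih, E_mul_E]; push_cast; ring_nf


lemma constCoeff_G (c : ℂ) : PowerSeries.constantCoeff (G c) = c := by
  rw [← PowerSeries.coeff_zero_eq_constantCoeff_apply]
  simp

lemma constCoeff_bexpS (c : ℂ) : PowerSeries.constantCoeff (bexpS c) = 1 := by
  rw [← PowerSeries.coeff_zero_eq_constantCoeff_apply]
  simp [bexpS]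

lemma prod_E {ι : Type*} (t : Finset ι) (b : ι → ℂ) :
    ∏ i ∈ t, E (b i) = E (∑ i ∈ t, b i) := by
  induction t using Finset.cons_induction with
  | empty => simp [E_zero]
  | cons a t ha ih => rw [Finset.prod_cons, Finset.sum_cons, ih, E_mul_E]

lemma geom_key (a b : ℂ) (n : ℕ) :
    (1 - PowerSeries.C a * E b) * ∑ r ∈ Finset.range n, PowerSeries.C (a ^ r) * E (r * b) =
      1 - PowerSeries.C (a ^ n) * E (n * b) := by
  have hz : ∀ r : ℕ, (PowerSeries.C a * E b) ^ r = PowerSeries.C (a ^ r) * E (r * b) := by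
    intro r
    rw [mul_pow, ← map_pow, E_pow]
  have := geom_sum_mul (PowerSeries.C a * E b) n
  calc (1 - PowerSeries.C a * E b) * ∑ r ∈ Finset.range n, PowerSeries.C (a ^ r) * E (r * b)
      = -((∑ r ∈ Finset.range n, (PowerSeries.C a * E b) ^ r) * (PowerSeries.C a * E b - 1)) := by
        simp_rw [hz]; ring
    _ = 1 - PowerSeries.C (a ^ n) * E (n * b) := by rw [this, hz n]; ring

lemma sylFactor_of_root {ρ : ℂ} {d : ℕ} (h : ρ ^ d = 1) : sylFactor ρ d = G (d : ℂ) := by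
  rw [sylFactor, if_pos h]

lemma sylFactor_of_not_root {ρ : ℂ} {d : ℕ} (h : ρ ^ d ≠ 1) :
    sylFactor ρ d = 1 - PowerSeries.C (ρ ^ d) * E (-(d : ℂ)) := by
  rw [sylFactor, if_neg h]
  ext n
  rcases n with _ | n
  · simp [constCoeff_E]
  · simp only [PowerSeries.coeff_mk, if_neg (Nat.succ_ne_zero n), map_sub,
      PowerSeries.coeff_one, if_neg (Nat.succ_ne_zero n), PowerSeries.coeff_C_mul, coeff_E]
    ring

lemma BP_inv_mul (l : List ℂ) :
    (l.map fun c => (bexpS c)⁻¹).prod * (l.map bexpS).prod = 1 := by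
  induction l with
  | nil => simp
  | cons a l ih =>
      simp only [List.map_cons, List.prod_cons]
      have h : (bexpS a)⁻¹ * bexpS a = 1 :=
        PowerSeries.inv_mul_cancel _ (by rw [constCoeff_bexpS]; exact one_ne_zero)
      calc (bexpS a)⁻¹ * (l.map fun c => (bexpS c)⁻¹).prod * (bexpS a * (l.map bexpS).prod)
          = ((bexpS a)⁻¹ * bexpS a) * ((l.map fun c => (bexpS c)⁻¹).prod * (l.map bexpS).prod) := by
            ring
        _ = 1 := by rw [h, ih, one_mul]

lemma GP_eq (l : List ℂ) :
    (l.map G).prod = PowerSeries.C l.prod * E (-l.sum) * (l.map bexpS).prod := by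
  induction l with
  | nil => simp [E_zero]
  | cons a l ih =>
      simp only [List.map_cons, List.prod_cons, List.sum_cons, ih, G_eq a]
      rw [neg_add]
      rw [← E_mul_E (-a) (-l.sum), map_mul]
      ring

lemma constCoeff_GP (l : List ℂ) :
    PowerSeries.constantCoeff (l.map G).prod = l.prod := by
  induction l with
  | nil => simp
  | cons a l ih =>
      rw [List.map_cons, List.prod_cons, map_mul, constCoeff_G, ih, List.prod_cons]

lemma flatMap_cast (e : List ℕ) : (e.flatMap fun a : ℕ => [(a : ℂ)]) = e.map (Nat.cast : ℕ → ℂ) := by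
  induction e with
  | nil => rfl
  | cons a t ih => simp [List.flatMap_cons, ih]

lemma polyPart_coeff (x : ℂ) (e : List ℕ) (he : ∀ a ∈ e, 0 < a) :
    polyPart x e =
      PowerSeries.coeff (e.length - 1)
        (E x * ((e.map fun a : ℕ => G (a : ℂ)).prod)⁻¹) := by
  set l : List ℂ := e.map (Nat.cast : ℕ → ℂ) with hl
  have hprod : l.prod = (e.prod : ℂ) := by rw [hl, ← Nat.cast_list_prod]
  have hsum : l.sum = (e.sum : ℂ) := by rw [hl, ← Nat.cast_list_sum]
  have hprodne : l.prod ≠ 0 := by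
    rw [hprod]
    exact Nat.cast_ne_zero.2 (List.prod_pos he).ne'
  set Q : PowerSeries ℂ := (l.map G).prod with hQ
  have hQc : PowerSeries.constantCoeff Q ≠ 0 := by rw [hQ, constCoeff_GP]; exact hprodne
  have hQne : Q ≠ 0 := fun h => hQc (by rw [h, map_zero])
  have key : E x * Q⁻¹ =
      PowerSeries.C l.prod⁻¹ * (E (x + l.sum) * (l.map fun c => (bexpS c)⁻¹).prod) := by
    apply mul_right_cancel₀ hQne
    rw [mul_assoc, PowerSeries.inv_mul_cancel _ hQc, mul_one]
    conv_rhs => rw [hQ, GP_eq l]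
    symm
    calc PowerSeries.C l.prod⁻¹ * (E (x + l.sum) * (l.map fun c => (bexpS c)⁻¹).prod) *
          (PowerSeries.C l.prod * E (-l.sum) * (l.map bexpS).prod)
        = (PowerSeries.C l.prod⁻¹ * PowerSeries.C l.prod) * (E (x + l.sum) * E (-l.sum)) *
            ((l.map fun c => (bexpS c)⁻¹).prod * (l.map bexpS).prod) := by ring
      _ = E x := by
          rw [← map_mul, inv_mul_cancel₀ hprodne, map_one, E_mul_E, BP_inv_mul, add_neg_cancel_right]
          ring
  have hlen : (e.map fun a : ℕ => G (a : ℂ)).prod = Q := by rw [hQ, hl, List.map_map]; rfl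
  rw [hlen, key, PowerSeries.coeff_C_mul]
  rw [polyPart, NBern]
  have hfact : ((e.length - 1).factorial : ℂ) ≠ 0 := Nat.cast_ne_zero.2 (Nat.factorial_ne_zero _)
  rw [show x + ((e.sum : ℕ) : ℂ) = x + l.sum from by rw [hsum], hprod]
  rw [hprod] at hprodne
  have hco : (List.map (fun ei : ℂ => ei) ((e : List ℕ) >>= fun a : ℕ => pure ((a : ℂ)))) = l := by
    rw [hl]
    simp only [List.bind_eq_flatMap, List.pure_def, List.map_id_fun', id]
    exact flatMap_cast e
  simp only [hco]
  have habc : ∀ (c p A : ℂ), A ≠ 0 → p ≠ 0 → A * c / (A * p) = p⁻¹ * c := by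
    intros c p A hA hp
    field_simp
  exact habc _ _ _ hfact hprodne

lemma geom_key' (a b : ℂ) (n : ℕ) :
    (1 - PowerSeries.C a * E b) * ∑ r ∈ Finset.range n, (PowerSeries.C a * E b) ^ r =
      1 - PowerSeries.C (a ^ n) * E (n * b) := by
  have hz : (PowerSeries.C a * E b) ^ n = PowerSeries.C (a ^ n) * E (n * b) := by
    rw [mul_pow, ← map_pow, E_pow]
  have h := geom_sum_mul (PowerSeries.C a * E b) n
  calc (1 - PowerSeries.C a * E b) * ∑ r ∈ Finset.range n, (PowerSeries.C a * E b) ^ r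
      = -((∑ r ∈ Finset.range n, (PowerSeries.C a * E b) ^ r) * (PowerSeries.C a * E b - 1)) := by
        ring
    _ = 1 - PowerSeries.C (a ^ n) * E (n * b) := by rw [h, hz]; ring

lemma listProd_eq {M : Type*} [CommMonoid M] (l : List ℕ) (f : ℕ → M) :
    (l.map f).prod = ∏ i : Fin l.length, f (l.get i) := by
  conv_lhs => rw [← List.ofFn_get l]
  rw [List.map_ofFn, List.prod_ofFn]
  rfl

lemma constCoeff_GPn (l : List ℕ) :
    PowerSeries.constantCoeff ((l.map fun a : ℕ => G (a : ℂ)).prod) = ((l.prod : ℕ) : ℂ) := by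
  induction l with
  | nil => simp
  | cons a t ih =>
      rw [List.map_cons, List.prod_cons, map_mul, constCoeff_G, ih, List.prod_cons]
      push_cast
      ring

lemma wave_summand (j : ℕ) (hj : 0 < j) (ρ : ℂ) (hρ : IsPrimitiveRoot ρ j)
    (d1 d2 : List ℕ) (hk : 1 ≤ d1.length)
    (h1 : ∀ x ∈ d1, 0 < x ∧ j ∣ x) (h2 : ∀ x ∈ d2, 0 < x ∧ ¬ j ∣ x) (s : ℕ) :
    PowerSeries.coeff (d1.length - 1)
      (E (s : ℂ) * (((d1 ++ d2).map (sylFactor ρ)).prod)⁻¹) =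
    ∑ r : Fin d2.length → Fin j,
      ρ ^ (∑ i, d2.get i * (r i : ℕ)) *
        polyPart ((s : ℂ) - ((∑ i, d2.get i * (r i : ℕ) : ℕ) : ℂ))
          (d1 ++ d2.map fun di => j * di) := by
  classical
  set m2 := d2.length with hm2
  set k := d1.length with hkdef
  set P1 : PowerSeries ℂ := (d1.map fun a : ℕ => G (a : ℂ)).prod with hP1def
  set z : Fin m2 → PowerSeries ℂ :=
      fun i => PowerSeries.C (ρ ^ d2.get i) * E (-(d2.get i : ℂ)) with hzdef
  set P2 : PowerSeries ℂ := ∏ i : Fin m2, (1 - z i) with hP2def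
  set Q2 : PowerSeries ℂ := ∏ i : Fin m2, G ((j * d2.get i : ℕ) : ℂ) with hQ2def
  set e : List ℕ := d1 ++ d2.map fun di => j * di with hedef
  set Q : PowerSeries ℂ := (e.map fun a : ℕ => G (a : ℂ)).prod with hQdef
  set P : PowerSeries ℂ := ((d1 ++ d2).map (sylFactor ρ)).prod with hPdef
  have hroot1 : ∀ x ∈ d1, ρ ^ x = 1 := fun x hx => (hρ.pow_eq_one_iff_dvd x).2 (h1 x hx).2
  have hroot2 : ∀ x ∈ d2, ρ ^ x ≠ 1 := fun x hx =>
    fun h => (h2 x hx).2 ((hρ.pow_eq_one_iff_dvd x).1 h)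
  have hPsplit : P = P1 * P2 := by
    rw [hPdef, List.map_append, List.prod_append]
    congr 1
    · rw [hP1def]
      congr 1
      exact List.map_congr_left fun x hx => sylFactor_of_root (hroot1 x hx)
    · rw [hP2def, listProd_eq d2 (sylFactor ρ)]
      exact Finset.prod_congr rfl fun i _ =>
        sylFactor_of_not_root (hroot2 _ (d2.get_mem i))
  have hQsplit : Q = P1 * Q2 := by
    rw [hQdef, hedef, List.map_append, List.prod_append]
    congr 1
    rw [hQ2def, listProd_eq (d2.map fun di => j * di) (fun a : ℕ => G (a : ℂ))]
    have hlen : (d2.map fun di => j * di).length = m2 := by rw [List.length_map]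
    apply Finset.prod_nbij' (fun i => Fin.cast hlen i) (fun i => Fin.cast hlen.symm i) <;>
      simp
  -- constant coefficients and nonvanishing
  have hP1c : PowerSeries.constantCoeff P1 ≠ 0 := by
    rw [hP1def, constCoeff_GPn]
    exact Nat.cast_ne_zero.2 (List.prod_pos fun x hx => (h1 x hx).1).ne'
  have hP2c : PowerSeries.constantCoeff P2 ≠ 0 := by
    rw [hP2def, map_prod]
    apply Finset.prod_ne_zero_iff.2
    intro i _
    rw [hzdef]
    simp only [map_sub, map_one, map_mul, PowerSeries.constantCoeff_C, constCoeff_E, mul_one]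
    exact sub_ne_zero.2 fun h => hroot2 _ (d2.get_mem i) h.symm
  have hPc : PowerSeries.constantCoeff P ≠ 0 := by
    rw [hPsplit, map_mul]; exact mul_ne_zero hP1c hP2c
  have hepos : ∀ x ∈ e, 0 < x := by
    intro x hx
    rw [hedef] at hx
    rcases List.mem_append.1 hx with h | h
    · exact (h1 x h).1
    · rcases List.mem_map.1 h with ⟨a, ha, rfl⟩
      exact Nat.mul_pos hj (h2 a ha).1
  have hQc : PowerSeries.constantCoeff Q ≠ 0 := by
    rw [hQdef, constCoeff_GPn]
    exact Nat.cast_ne_zero.2 (List.prod_pos hepos).ne'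
  have hPne : P ≠ 0 := fun h => hPc (by rw [h, map_zero])
  have hQne : Q ≠ 0 := fun h => hQc (by rw [h, map_zero])
  -- geometric decomposition
  have hXG : ∀ i : Fin m2, (1 - z i) * ∑ t : Fin j, z i ^ (t : ℕ) =
      PowerSeries.X * G ((j * d2.get i : ℕ) : ℂ) := by
    intro i
    rw [hzdef]
    rw [Fin.sum_univ_eq_sum_range (fun t => (PowerSeries.C (ρ ^ d2.get i) * E (-(d2.get i : ℂ))) ^ t) j]
    rw [geom_key']
    rw [X_mul_G]
    rw [← pow_mul, mul_comm (d2.get i) j, pow_mul, hρ.pow_eq_one, one_pow, map_one, one_mul]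
    congr 2
    push_cast
    ring
  have key2 : P2 * (∑ r : Fin m2 → Fin j, ∏ i, z i ^ (r i : ℕ)) = PowerSeries.X ^ m2 * Q2 := by
    rw [← Fintype.prod_sum (κ := fun _ : Fin m2 => Fin j) (f := fun i t => z i ^ (t : ℕ)),
      hP2def, ← Finset.prod_mul_distrib]
    rw [Finset.prod_congr rfl fun i _ => hXG i, Finset.prod_mul_distrib, Finset.prod_const,
      Finset.card_univ, Fintype.card_fin, hQ2def]
  -- the sum S in closed form
  have hS2 : ∀ r : Fin m2 → Fin j, (∏ i, z i ^ (r i : ℕ)) =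
      PowerSeries.C (ρ ^ (∑ i, d2.get i * (r i : ℕ))) *
        E (-(((∑ i, d2.get i * (r i : ℕ) : ℕ)) : ℂ)) := by
    intro r
    have hzr : ∀ i : Fin m2, z i ^ (r i : ℕ) =
        PowerSeries.C (ρ ^ (d2.get i * (r i : ℕ))) * E (-(((d2.get i * (r i : ℕ) : ℕ)) : ℂ)) := by
      intro i
      rw [hzdef, mul_pow, ← map_pow, ← pow_mul, E_pow]
      congr 2
      push_cast
      ring
    rw [Finset.prod_congr rfl fun i _ => hzr i, Finset.prod_mul_distrib, ← map_prod,
      Finset.prod_pow_eq_pow_sum, prod_E]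
    congr 2
    push_cast
    rw [Finset.sum_neg_distrib]
  -- the key power series identity
  have main : PowerSeries.X ^ m2 * (E (s : ℂ) * P⁻¹) =
      ∑ r : Fin m2 → Fin j,
        PowerSeries.C (ρ ^ (∑ i, d2.get i * (r i : ℕ))) *
          (E ((s : ℂ) - ((∑ i, d2.get i * (r i : ℕ) : ℕ) : ℂ)) * Q⁻¹) := by
    apply mul_right_cancel₀ (mul_ne_zero hPne hQne)
    have lhs_eq : PowerSeries.X ^ m2 * (E (s : ℂ) * P⁻¹) * (P * Q) =
        PowerSeries.X ^ m2 * E (s : ℂ) * Q := by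
      calc PowerSeries.X ^ m2 * (E (s : ℂ) * P⁻¹) * (P * Q)
          = (P⁻¹ * P) * (PowerSeries.X ^ m2 * E (s : ℂ) * Q) := by ring
        _ = PowerSeries.X ^ m2 * E (s : ℂ) * Q := by
            rw [PowerSeries.inv_mul_cancel _ hPc, one_mul]
    rw [lhs_eq, Finset.sum_mul]
    have term_eq : ∀ r : Fin m2 → Fin j,
        PowerSeries.C (ρ ^ (∑ i, d2.get i * (r i : ℕ))) *
          (E ((s : ℂ) - ((∑ i, d2.get i * (r i : ℕ) : ℕ) : ℂ)) * Q⁻¹) * (P * Q) =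
        E (s : ℂ) * (∏ i, z i ^ (r i : ℕ)) * P := by
      intro r
      have hE : E ((s : ℂ) - ((∑ i, d2.get i * (r i : ℕ) : ℕ) : ℂ)) =
          E (s : ℂ) * E (-(((∑ i, d2.get i * (r i : ℕ) : ℕ)) : ℂ)) := by
        rw [E_mul_E, sub_eq_add_neg]
      rw [hE, hS2 r]
      calc PowerSeries.C (ρ ^ (∑ i, d2.get i * (r i : ℕ))) *
            (E (s : ℂ) * E (-(((∑ i, d2.get i * (r i : ℕ) : ℕ)) : ℂ)) * Q⁻¹) * (P * Q)
          = (Q⁻¹ * Q) * (E (s : ℂ) *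
              (PowerSeries.C (ρ ^ (∑ i, d2.get i * (r i : ℕ))) *
                E (-(((∑ i, d2.get i * (r i : ℕ) : ℕ)) : ℂ))) * P) := by ring
        _ = _ := by rw [PowerSeries.inv_mul_cancel _ hQc, one_mul]
    rw [Finset.sum_congr rfl fun r _ => term_eq r, ← Finset.sum_mul, ← Finset.mul_sum]
    rw [hPsplit, hQsplit]
    symm
    calc E (s : ℂ) * (∑ r : Fin m2 → Fin j, ∏ i, z i ^ (r i : ℕ)) * (P1 * P2)
        = (P2 * (∑ r : Fin m2 → Fin j, ∏ i, z i ^ (r i : ℕ))) * (E (s : ℂ) * P1) := by ring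
      _ = PowerSeries.X ^ m2 * E (s : ℂ) * (P1 * Q2) := by rw [key2]; ring
  -- take coefficients
  have hcoeff : PowerSeries.coeff (k - 1) (E (s : ℂ) * P⁻¹) =
      PowerSeries.coeff ((k - 1) + m2) (PowerSeries.X ^ m2 * (E (s : ℂ) * P⁻¹)) := by
    rw [PowerSeries.coeff_X_pow_mul]
  rw [hcoeff, main, map_sum]
  apply Finset.sum_congr rfl
  intro r _
  rw [PowerSeries.coeff_C_mul]
  congr 1
  rw [polyPart_coeff _ e hepos]
  have hlen : e.length - 1 = k - 1 + m2 := by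
    rw [hedef]
    simp only [List.length_append, List.length_map]
    omega
  rw [hlen]

lemma circ_sum (j : ℕ) (hj : 0 < j) (s n : ℕ) :
    ∑ ρ ∈ primitiveRoots j ℂ, (ρ ^ s)⁻¹ * ρ ^ n =
      primeCirculator j ((s : ℤ) - (n : ℤ)) := by
  rw [primeCirculator]
  refine Finset.sum_nbij' (fun ρ => ρ⁻¹) (fun ρ => ρ⁻¹) ?_ ?_ ?_ ?_ ?_
  · intro ρ hρ
    exact (mem_primitiveRoots hj).2 ((mem_primitiveRoots hj).1 hρ).inv
  · intro ρ hρ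
    exact (mem_primitiveRoots hj).2 ((mem_primitiveRoots hj).1 hρ).inv
  · intro ρ _; exact inv_inv ρ
  · intro ρ _; exact inv_inv ρ
  · intro ρ hρ
    have hρ0 : ρ ≠ 0 := ((mem_primitiveRoots hj).1 hρ).ne_zero hj.ne'
    rw [inv_zpow, ← zpow_neg, neg_sub, zpow_sub₀ hρ0, zpow_natCast, zpow_natCast,
      div_eq_mul_inv, mul_comm]

/-- the `j`-th Sylvester wave as a finite superposition of polynomial
parts of the `j`-modified set of summands multiplied by prime circulators. -/
theorem sylvester_wave_superposition (j : ℕ) (hj : 1 ≤ j) (d1 d2 : List ℕ)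
    (hk : 1 ≤ d1.length)
    (h1 : ∀ x ∈ d1, 0 < x ∧ j ∣ x) (h2 : ∀ x ∈ d2, 0 < x ∧ ¬ j ∣ x) (s : ℕ) :
    SylvesterWave j s (d1 ++ d2) =
      ∑ r : Fin d2.length → Fin j,
        polyPart ((s : ℂ) - ((∑ i, d2.get i * (r i : ℕ) : ℕ) : ℂ))
            (d1 ++ d2.map fun di => j * di) *
          primeCirculator j ((s : ℤ) - ∑ i, (d2.get i : ℤ) * (r i : ℕ)) := by
  classical
  have hj0 : 0 < j := hj
  have hkW : kWeight j (d1 ++ d2) = d1.length := by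
    rw [kWeight, List.filter_append,
      List.filter_eq_self.2 fun a ha => decide_eq_true (h1 a ha).2,
      List.filter_eq_nil_iff.2 fun a ha => by simpa using (h2 a ha).2]
    simp
  rw [SylvesterWave, hkW]
  have step1 : ∀ ρ ∈ primitiveRoots j ℂ,
      PowerSeries.coeff (d1.length - 1)
        ((ρ ^ s)⁻¹ • (PowerSeries.rescale (s : ℂ) (PowerSeries.exp ℂ) *
          (((d1 ++ d2).map (sylFactor ρ)).prod)⁻¹)) =
      ∑ r : Fin d2.length → Fin j,
        (ρ ^ s)⁻¹ * (ρ ^ (∑ i, d2.get i * (r i : ℕ)) *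
          polyPart ((s : ℂ) - ((∑ i, d2.get i * (r i : ℕ) : ℕ) : ℂ))
            (d1 ++ d2.map fun di => j * di)) := by
    intro ρ hρm
    have hρ := (mem_primitiveRoots hj0).1 hρm
    rw [map_smul, smul_eq_mul, wave_summand j hj0 ρ hρ d1 d2 hk h1 h2 s, Finset.mul_sum]
  rw [Finset.sum_congr rfl step1, Finset.sum_comm]
  apply Finset.sum_congr rfl
  intro r _
  have hcast : ((s : ℤ) - ∑ i, (d2.get i : ℤ) * (r i : ℕ)) =
      ((s : ℤ) - ((∑ i, d2.get i * (r i : ℕ) : ℕ) : ℤ)) := by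
    push_cast
    ring
  rw [hcast, ← circ_sum j hj0 s (∑ i, d2.get i * (r i : ℕ)), Finset.mul_sum]
  apply Finset.sum_congr rfl
  intro ρ _
  ring

end
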